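/- arXiv:1303.3697 — 3 statements merged into one kernel-verified Lean document; each statement's English description precedes it below -/
import Mathlib

section
/- Let I ⊆ ℝ be an open invex set with respect to η : I × I → ℝ₊, let f : I → ℝ be differentiable, a, b ∈ I with η(b,a) ≠ 0, and let q ≥ 1. If |f'|^q is prequasiinvex on I, then |(1/6)[f(a) + 4f(a + η(b,a)/2) + f(a + η(b,a))] − (1/η(b,a)) ∫_a^{a+η(b,a)} f(x) dx| ≤ (5/36)·η(b,a)·(max{|f'(a)|^q, |f'(b)|^q})^{1/q}. -/
/-!
Rescale to `g t = f (a + η(b,a) t)` on `[0, 1]`. Integrating by parts against the Peano kernel of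
Simpson's rule, `p t = t - 1/6` on `[0, 1/2]` and `p t = t - 5/6` on `[1/2, 1]`, writes the error
of Simpson's rule as `∫ p g'`, and `∫ |p| = 5/36`. Prequasiinvexity of `|f'|^q`, applied on the
segment from `a` to `a + η(b,a)`, bounds `|f'|` there by `(max (|f' a|^q) (|f' b|^q))^(1/q)`.
-/

open Real MeasureTheory intervalIntegral Set

theorem integral_abs_sub_of_mem_Icc {u v c : ℝ} (hu : u ≤ c) (hv : c ≤ v) :
    ∫ t in u..v, |t - c| = ((c - u) ^ 2 + (v - c) ^ 2) / 2 := by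
  have hcont : Continuous fun t : ℝ => |t - c| := by fun_prop
  rw [← integral_add_adjacent_intervals (hcont.intervalIntegrable u c)
    (hcont.intervalIntegrable c v)]
  have hleft : ∫ t in u..c, |t - c| = ∫ t in u..c, (c - t) := integral_congr fun t ht => by
    rw [uIcc_of_le hu] at ht
    simp only [abs_of_nonpos (sub_nonpos.2 ht.2), neg_sub]
  have hright : ∫ t in c..v, |t - c| = ∫ t in c..v, (t - c) := integral_congr fun t ht => by
    rw [uIcc_of_le hv] at ht
    simp only [abs_of_nonneg (sub_nonneg.2 ht.1)]
  rw [hleft, hright, integral_sub intervalIntegrable_const intervalIntegrable_id,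
    integral_sub intervalIntegrable_id intervalIntegrable_const]
  simp only [intervalIntegral.integral_const, integral_id, smul_eq_mul]
  ring

theorem intervalIntegrable_deriv_of_abs_le {g : ℝ → ℝ} {u v K : ℝ} (huv : u ≤ v)
    (hK : ∀ t ∈ Icc u v, |deriv g t| ≤ K) : IntervalIntegrable (deriv g) volume u v := by
  refine (intervalIntegrable_const (c := K)).mono_fun'
    (measurable_deriv g).aestronglyMeasurable ?_
  rw [uIoc_of_le huv]
  filter_upwards [ae_restrict_mem measurableSet_Ioc] with t ht
  exact hK t (Ioc_subset_Icc_self ht)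

theorem integral_sub_mul_deriv {g : ℝ → ℝ} {u v c : ℝ}
    (hg : ∀ t ∈ uIcc u v, DifferentiableAt ℝ g t)
    (hg' : IntervalIntegrable (deriv g) volume u v) :
    ∫ t in u..v, (t - c) * deriv g t = (v - c) * g v - (u - c) * g u - ∫ t in u..v, g t := by
  simpa only [one_mul, id] using integral_mul_deriv_eq_deriv_mul (u' := fun _ => 1)
    (fun t _ => (hasDerivAt_id t).sub_const c) (fun t ht => (hg t ht).hasDerivAt)
    intervalIntegrable_const hg'

theorem abs_integral_sub_mul_le {φ : ℝ → ℝ} {u v c K : ℝ} (huv : u ≤ v)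
    (hK : ∀ t ∈ Icc u v, |φ t| ≤ K) :
    |∫ t in u..v, (t - c) * φ t| ≤ K * ∫ t in u..v, |t - c| := by
  rw [← intervalIntegral.integral_const_mul, ← Real.norm_eq_abs]
  refine norm_integral_le_of_norm_le huv (ae_of_all _ fun t ht => ?_)
    (Continuous.intervalIntegrable (by fun_prop : Continuous fun t : ℝ => K * |t - c|) u v)
  rw [norm_mul, mul_comm K, Real.norm_eq_abs, Real.norm_eq_abs]
  exact mul_le_mul_of_nonneg_left (hK t (Ioc_subset_Icc_self ht)) (abs_nonneg _)

theorem simpson_sub_integral_eq {g : ℝ → ℝ}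
    (hg : ∀ t ∈ Icc (0 : ℝ) 1, DifferentiableAt ℝ g t)
    (hg' : IntervalIntegrable (deriv g) volume 0 1) :
    (1/6 : ℝ) * (g 0 + 4 * g (1/2) + g 1) - ∫ t in (0 : ℝ)..1, g t =
      (∫ t in (0 : ℝ)..1/2, (t - 1/6) * deriv g t) +
        ∫ t in (1/2 : ℝ)..1, (t - 5/6) * deriv g t := by
  have hleft : uIcc (0 : ℝ) (1/2) ⊆ Icc 0 1 := by
    rw [uIcc_of_le (by norm_num)]; exact Icc_subset_Icc le_rfl (by norm_num)
  have hright : uIcc (1/2 : ℝ) 1 ⊆ Icc 0 1 := by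
    rw [uIcc_of_le (by norm_num)]; exact Icc_subset_Icc (by norm_num) le_rfl
  have hg01 : uIcc (0 : ℝ) 1 = Icc 0 1 := uIcc_of_le zero_le_one
  have hgint : IntervalIntegrable g volume 0 1 :=
    ContinuousOn.intervalIntegrable (hg01 ▸ fun t ht => (hg t ht).continuousAt.continuousWithinAt)
  rw [integral_sub_mul_deriv (fun t ht => hg t (hleft ht)) (hg'.mono_set (hg01 ▸ hleft)),
    integral_sub_mul_deriv (fun t ht => hg t (hright ht)) (hg'.mono_set (hg01 ▸ hright)),
    ← integral_add_adjacent_intervals (hgint.mono_set (hg01 ▸ hleft))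
      (hgint.mono_set (hg01 ▸ hright))]
  ring

theorem abs_simpson_sub_integral_le {g : ℝ → ℝ} {K : ℝ}
    (hg : ∀ t ∈ Icc (0 : ℝ) 1, DifferentiableAt ℝ g t)
    (hK : ∀ t ∈ Icc (0 : ℝ) 1, |deriv g t| ≤ K) :
    |(1/6 : ℝ) * (g 0 + 4 * g (1/2) + g 1) - ∫ t in (0 : ℝ)..1, g t| ≤ 5/36 * K := by
  rw [simpson_sub_integral_eq hg (intervalIntegrable_deriv_of_abs_le zero_le_one hK)]
  have hleft := abs_integral_sub_mul_le (c := 1/6) (by norm_num : (0 : ℝ) ≤ 1/2)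
    fun t ht => hK t ⟨ht.1, ht.2.trans (by norm_num)⟩
  have hright := abs_integral_sub_mul_le (c := 5/6) (by norm_num : (1/2 : ℝ) ≤ 1)
    fun t ht => hK t ⟨(by norm_num : (0 : ℝ) ≤ 1/2).trans ht.1, ht.2⟩
  rw [integral_abs_sub_of_mem_Icc (by norm_num) (by norm_num)] at hleft hright
  calc _ ≤ _ := abs_add_le _ _
    _ ≤ _ := add_le_add hleft hright
    _ = 5/36 * K := by ring

theorem abs_simpson_sub_average_le {f : ℝ → ℝ} {a h C : ℝ} (hh : 0 < h)
    (hf : ∀ x ∈ Icc a (a + h), DifferentiableAt ℝ f x)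
    (hC : ∀ x ∈ Icc a (a + h), |deriv f x| ≤ C) :
    |(1/6 : ℝ) * (f a + 4 * f (a + h / 2) + f (a + h)) - (1 / h) * ∫ x in a..(a + h), f x| ≤
      5/36 * h * C := by
  have hmem : ∀ t ∈ Icc (0 : ℝ) 1, a + h * t ∈ Icc a (a + h) := fun t ht =>
    ⟨le_add_of_nonneg_right (mul_nonneg hh.le ht.1),
      add_le_add_right (mul_le_of_le_one_right hh.le ht.2) a⟩
  have hderiv (t : ℝ) : deriv (fun t => f (a + h * t)) t = h * deriv f (a + h * t) := by
    simpa only [deriv_comp_const_add, smul_eq_mul] using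
      deriv_comp_mul_left (f := fun x => f (a + x)) h t
  have hsimpson := abs_simpson_sub_integral_le (g := fun t => f (a + h * t)) (K := h * C)
    (fun t ht => (hf _ (hmem t ht)).comp t (by fun_prop))
    (fun t ht => by
      rw [hderiv, abs_mul, abs_of_pos hh]
      exact mul_le_mul_of_nonneg_left (hC _ (hmem t ht)) hh.le)
  simpa [integral_comp_add_mul _ hh.ne', one_div, ← div_eq_mul_inv, mul_assoc] using hsimpson

theorem stmt5 (I : Set ℝ) (η : ℝ → ℝ → ℝ) (f : ℝ → ℝ) (a b : ℝ)
    (hI : IsOpen I)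
    (hinv : ∀ u ∈ I, ∀ v ∈ I, ∀ t ∈ Set.Icc (0:ℝ) 1, u + t * η v u ∈ I)
    (hηnn : ∀ u ∈ I, ∀ v ∈ I, 0 ≤ η v u)
    (ha : a ∈ I) (hb : b ∈ I) (hη : η b a ≠ 0)
    (hf : DifferentiableOn ℝ f I)
    (q : ℝ) (hq : 1 ≤ q)
    (hpre : ∀ u ∈ I, ∀ v ∈ I, ∀ t ∈ Set.Icc (0:ℝ) 1,
      |deriv f (u + t * η v u)| ^ q ≤ max (|deriv f u| ^ q) (|deriv f v| ^ q)) :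
    |(1/6 : ℝ) * (f a + 4 * f (a + η b a / 2) + f (a + η b a)) -
      (1 / η b a) * ∫ x in a..(a + η b a), f x| ≤ (5/36) * η b a * (max (|deriv f a| ^ q) (|deriv f b| ^ q)) ^ (1/q) := by
  have hh : 0 < η b a := (hηnn a ha b hb).lt_of_ne' hη
  have hsegment : ∀ x ∈ Icc a (a + η b a), ∃ t ∈ Icc (0 : ℝ) 1, a + t * η b a = x :=
    fun x hx => ⟨(x - a) / η b a,
      ⟨div_nonneg (by linarith [hx.1]) hh.le, (div_le_one hh).2 (by linarith [hx.2])⟩,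
      by field_simp; ring⟩
  refine abs_simpson_sub_average_le hh (fun x hx => ?_) (fun x hx => ?_)
  · obtain ⟨t, ht, rfl⟩ := hsegment x hx
    exact hf.differentiableAt (hI.mem_nhds (hinv a ha b hb t ht))
  · obtain ⟨t, ht, rfl⟩ := hsegment x hx
    have hM : 0 ≤ max (|deriv f a| ^ q) (|deriv f b| ^ q) :=
      le_max_of_le_left (rpow_nonneg (abs_nonneg _) q)
    rw [one_div, le_rpow_inv_iff_of_pos (abs_nonneg _) hM (by linarith)]
    exact hpre a ha b hb t ht
end

section
/- (Special case η(b,a) = b − a of Theorem 4.1 with q = 1.) Let f : [a,b] → ℝ be differentiable with a < b, and suppose |f'| is quasiconvex on [a,b]. Then |(1/6)[f(a) + 4f((a+b)/2) + f(b)] − (1/(b−a)) ∫_a^b f(x) dx| ≤ (5/36)(b−a)·max{|f'(a)|, |f'(b)|}. -/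
open Real MeasureTheory intervalIntegral Set

/-!
Integrating by parts against the Peano kernel `k` of Simpson's rule, which is `x - (5a+b)/6` on
`[a, m]` and `x - (a+5b)/6` on `[m, b]` with `m = (a+b)/2`, writes the Simpson error as
`(b-a)⁻¹ ∫ k f'`. Quasiconvexity bounds `|f'|` on `[a, b]` by `max |f' a| |f' b|`, and
`∫ |k| = 5 (b-a)² / 36`.
-/

lemma abs_le_max_of_forall_segment {g : ℝ → ℝ} {a b : ℝ} (hab : a ≤ b)
    (hg : ∀ t ∈ Icc (0 : ℝ) 1, |g ((1 - t) * a + t * b)| ≤ max |g a| |g b|) :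
    ∀ x ∈ Icc a b, |g x| ≤ max |g a| |g b| := by
  rw [← segment_eq_Icc hab]
  rintro x ⟨s, t, hs, ht, hst, rfl⟩
  obtain rfl : s = 1 - t := by linarith
  exact hg t ⟨ht, by linarith⟩

lemma intervalIntegrable_of_hasDerivAt_of_abs_le {f f' : ℝ → ℝ} {a b M : ℝ}
    (hf : ∀ x ∈ uIcc a b, HasDerivAt f (f' x) x) (hM : ∀ x ∈ uIcc a b, |f' x| ≤ M) :
    IntervalIntegrable f' volume a b := by
  have hderiv : EqOn (deriv f) f' (uIoc a b) := fun x hx => (hf x (uIoc_subset_uIcc hx)).deriv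
  rw [intervalIntegrable_iff]
  refine (Measure.integrableOn_of_bounded (M := M) measure_Ioc_lt_top.ne
    (measurable_deriv f).aestronglyMeasurable ?_).congr_fun hderiv measurableSet_uIoc
  refine (ae_restrict_iff' measurableSet_uIoc).2 (ae_of_all _ fun x hx => ?_)
  rw [hderiv hx, Real.norm_eq_abs]
  exact hM x (uIoc_subset_uIcc hx)

lemma integral_sub_const_mul_deriv {f f' : ℝ → ℝ} {a b : ℝ} (c : ℝ)
    (hf : ∀ x ∈ uIcc a b, HasDerivAt f (f' x) x) (hf' : IntervalIntegrable f' volume a b) :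
    ∫ x in a..b, (x - c) * f' x = (b - c) * f b - (a - c) * f a - ∫ x in a..b, f x := by
  rw [integral_mul_deriv_eq_deriv_mul (fun x _ => (hasDerivAt_id' x).sub_const c) hf
    intervalIntegrable_const hf']
  simp only [one_mul]

lemma integral_abs_sub_const {p q : ℝ} (c : ℝ) (hpc : p ≤ c) (hcq : c ≤ q) :
    ∫ x in p..q, |x - c| = ((c - p) ^ 2 + (q - c) ^ 2) / 2 := by
  rw [integral_comp_sub_right (fun x => |x|),
    ← integral_add_adjacent_intervals (b := 0) (continuous_abs.intervalIntegrable _ _)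
      (continuous_abs.intervalIntegrable _ _),
    integral_congr (g := fun x => -x) fun x hx => abs_of_nonpos ?_,
    integral_congr (a := 0) (g := fun x => x) fun x hx => abs_of_nonneg ?_]
  · rw [intervalIntegral.integral_neg, integral_id, integral_id]
    ring
  · rw [uIcc_of_le (by linarith)] at hx; exact hx.1
  · rw [uIcc_of_le (by linarith)] at hx; exact hx.2

lemma abs_integral_sub_const_mul_le {g : ℝ → ℝ} {p q M : ℝ} (c : ℝ) (hpc : p ≤ c)
    (hcq : c ≤ q) (hg : IntervalIntegrable g volume p q) (hM : ∀ x ∈ Icc p q, |g x| ≤ M) :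
    |∫ x in p..q, (x - c) * g x| ≤ M * (((c - p) ^ 2 + (q - c) ^ 2) / 2) := by
  have hpq : p ≤ q := hpc.trans hcq
  calc |∫ x in p..q, (x - c) * g x|
      ≤ ∫ x in p..q, |(x - c) * g x| := abs_integral_le_integral_abs hpq
    _ ≤ ∫ x in p..q, M * |x - c| := by
        refine integral_mono_on hpq ?_ ((continuous_const.mul
          (continuous_abs.comp (continuous_sub_right c))).intervalIntegrable _ _) fun x hx => ?_
        · exact (hg.continuousOn_mul (continuous_sub_right c).continuousOn).abs
        · rw [abs_mul, mul_comm M]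
          exact mul_le_mul_of_nonneg_left (hM x hx) (abs_nonneg _)
    _ = M * (((c - p) ^ 2 + (q - c) ^ 2) / 2) := by
        rw [intervalIntegral.integral_const_mul, integral_abs_sub_const c hpc hcq]

lemma simpson_sub_average_eq {f f' : ℝ → ℝ} {a b : ℝ} (hab : a < b)
    (hf : ∀ x ∈ Icc a b, HasDerivAt f (f' x) x) (hf' : IntervalIntegrable f' volume a b) :
    (1 / 6 : ℝ) * (f a + 4 * f ((a + b) / 2) + f b) - (1 / (b - a)) * ∫ x in a..b, f x =
      (1 / (b - a)) * ((∫ x in a..(a + b) / 2, (x - (5 * a + b) / 6) * f' x) +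
        ∫ x in (a + b) / 2..b, (x - (a + 5 * b) / 6) * f' x) := by
  set m := (a + b) / 2 with hm
  have hsub : ∀ {u v}, u ∈ Icc a b → v ∈ Icc a b → uIcc u v ⊆ Icc a b := uIcc_subset_Icc
  have ha : a ∈ Icc a b := left_mem_Icc.2 hab.le
  have hb : b ∈ Icc a b := right_mem_Icc.2 hab.le
  have hmI : m ∈ Icc a b := ⟨by linarith, by linarith⟩
  have hfc : ContinuousOn f (Icc a b) := fun x hx => (hf x hx).continuousAt.continuousWithinAt
  have hsplit := integral_add_adjacent_intervals (μ := volume)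
    ((hfc.mono (hsub ha hmI)).intervalIntegrable) ((hfc.mono (hsub hmI hb)).intervalIntegrable)
  rw [integral_sub_const_mul_deriv _ (fun x hx => hf x (hsub ha hmI hx))
      (hf'.mono_set (uIcc_subset_uIcc_left (uIcc_of_le hab.le ▸ hmI))),
    integral_sub_const_mul_deriv _ (fun x hx => hf x (hsub hmI hb hx))
      (hf'.mono_set (uIcc_subset_uIcc_right (uIcc_of_le hab.le ▸ hmI))), ← hsplit]
  field_simp [sub_ne_zero.2 hab.ne']
  ring

lemma abs_simpson_sub_average_le_s18 {f f' : ℝ → ℝ} {a b M : ℝ} (hab : a < b)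
    (hf : ∀ x ∈ Icc a b, HasDerivAt f (f' x) x) (hM : ∀ x ∈ Icc a b, |f' x| ≤ M) :
    |(1 / 6 : ℝ) * (f a + 4 * f ((a + b) / 2) + f b) - (1 / (b - a)) * ∫ x in a..b, f x| ≤
      5 / 36 * (b - a) * M := by
  have hf' : IntervalIntegrable f' volume a b :=
    intervalIntegrable_of_hasDerivAt_of_abs_le (M := M) (uIcc_of_le hab.le ▸ hf)
      (uIcc_of_le hab.le ▸ hM)
  have hmid : (a + b) / 2 ∈ uIcc a b := uIcc_of_le hab.le ▸ ⟨by linarith, by linarith⟩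
  have hleft : |∫ x in a..(a + b) / 2, (x - (5 * a + b) / 6) * f' x| ≤
      M * (5 * (b - a) ^ 2 / 72) :=
    (abs_integral_sub_const_mul_le _ (by linarith) (by linarith)
      (hf'.mono_set (uIcc_subset_uIcc_left hmid))
      (fun x hx => hM x ⟨hx.1, by linarith [hx.2]⟩)).trans_eq (by ring)
  have hright : |∫ x in (a + b) / 2..b, (x - (a + 5 * b) / 6) * f' x| ≤
      M * (5 * (b - a) ^ 2 / 72) :=
    (abs_integral_sub_const_mul_le _ (by linarith) (by linarith)
      (hf'.mono_set (uIcc_subset_uIcc_right hmid))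
      (fun x hx => hM x ⟨by linarith [hx.1], hx.2⟩)).trans_eq (by ring)
  rw [simpson_sub_average_eq hab hf hf', abs_mul, abs_of_pos (one_div_pos.2 (sub_pos.2 hab))]
  calc 1 / (b - a) * |(∫ x in a..(a + b) / 2, (x - (5 * a + b) / 6) * f' x) +
        ∫ x in (a + b) / 2..b, (x - (a + 5 * b) / 6) * f' x|
      ≤ 1 / (b - a) * (M * (5 * (b - a) ^ 2 / 72) + M * (5 * (b - a) ^ 2 / 72)) := by
        gcongr
        exact (abs_add_le _ _).trans (add_le_add hleft hright)
    _ = 5 / 36 * (b - a) * M := by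
        field_simp [sub_ne_zero.2 hab.ne']
        ring

theorem stmt18 (f f' : ℝ → ℝ) (a b : ℝ) (hab : a < b)
    (hf : ∀ x ∈ Set.Icc a b, HasDerivAt f (f' x) x)
    (hq : ∀ x ∈ Set.Icc a b, ∀ y ∈ Set.Icc a b, ∀ t ∈ Set.Icc (0:ℝ) 1,
      |f' ((1 - t) * x + t * y)| ≤ max (|f' x|) (|f' y|)) :
    |(1/6 : ℝ) * (f a + 4 * f ((a + b) / 2) + f b) - (1 / (b - a)) * ∫ x in a..b, f x| ≤
      (5/36) * (b - a) * max (|f' a|) (|f' b|) :=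
  abs_simpson_sub_average_le_s18 hab hf <| abs_le_max_of_forall_segment hab.le <|
    hq a (left_mem_Icc.2 hab.le) b (right_mem_Icc.2 hab.le)
end

section
/- (Special case η(b,a) = b − a of Lemma 3.1.) Let f : [a,b] → ℝ be absolutely continuous with a < b. Then (1/6)[f(a) + 4f((a+b)/2) + f(b)] − (1/(b−a)) ∫_a^b f(x) dx = (b−a) ∫_0^1 m(t) f'(a + t(b−a)) dt, where m(t) = t − 1/6 for t ∈ [0,1/2) and m(t) = t − 5/6 for t ∈ [1/2,1]. -/
open Real MeasureTheory intervalIntegral Set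

/-!
After the substitution `x = a + t (b - a)` it suffices to work on `[0, 1]` with
`φ t = φ 0 + ∫₀ᵗ ψ`. Integration by parts against the absolutely continuous primitive gives
`∫₀¹ φ = φ 0 + ∫₀¹ (1 - t) ψ t`, and away from `t = 1/2` the kernel is
`t - 5/6 + (2/3) 𝟙[t ≤ 1/2]`, so both sides are the same combination of
`∫₀^{1/2} ψ`, `∫₀¹ ψ` and `∫₀¹ (1 - t) ψ t`.
-/

theorem mul_integral_comp_add_mul_sub (g : ℝ → ℝ) (a b t : ℝ) :
    (b - a) * ∫ s in 0..t, g (a + s * (b - a)) = ∫ x in a..a + t * (b - a), g x := by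
  simpa [mul_comm] using smul_integral_comp_add_mul (a := 0) (b := t) g (b - a) a

theorem integral_primitive_eq_integral_sub_mul {ψ : ℝ → ℝ} {a b : ℝ}
    (hψ : IntervalIntegrable ψ volume a b) :
    ∫ x in a..b, ∫ t in a..x, ψ t = ∫ t in a..b, (b - t) * ψ t := by
  have hF := hψ.absolutelyContinuousOnInterval_intervalIntegral left_mem_uIcc
  have hg : AbsolutelyContinuousOnInterval (fun x ↦ b - x) a b :=
    (contDiff_const.sub contDiff_id).contDiffOn.absolutelyContinuousOnInterval
  have hparts := hF.integral_mul_deriv_eq_deriv_mul hg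
  have hderiv : ∀ᵐ x, x ∈ uIoc a b →
      deriv (fun x ↦ ∫ t in a..x, ψ t) x * (b - x) = (b - x) * ψ x := by
    filter_upwards [hψ.ae_hasDerivAt_integral] with x hx hxab
    rw [(hx (uIoc_subset_uIcc hxab) a left_mem_uIcc).deriv, mul_comm]
  have hg' : deriv (fun x ↦ b - x) = fun _ ↦ -1 := by
    ext x; simp
  simp only [hg', sub_self, mul_zero, integral_same, zero_mul, mul_neg, mul_one,
    intervalIntegral.integral_neg, integral_congr_ae hderiv] at hparts
  linarith

theorem integral_eq_mul_add_integral_sub_mul {φ ψ : ℝ → ℝ} {a b : ℝ}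
    (hψ : IntervalIntegrable ψ volume a b)
    (hφ : ∀ x ∈ uIcc a b, φ x = φ a + ∫ t in a..x, ψ t) :
    ∫ x in a..b, φ x = (b - a) * φ a + ∫ t in a..b, (b - t) * ψ t := by
  have hprim : IntervalIntegrable (fun x ↦ ∫ t in a..x, ψ t) volume a b :=
    (continuousOn_primitive_interval' hψ left_mem_uIcc).intervalIntegrable
  rw [integral_congr hφ, intervalIntegral.integral_add intervalIntegrable_const hprim,
    intervalIntegral.integral_const, integral_primitive_eq_integral_sub_mul hψ, smul_eq_mul]

noncomputable def simpsonKernel (t : ℝ) : ℝ := if t < 1 / 2 then t - 1 / 6 else t - 5 / 6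

theorem simpsonKernel_mul_ae_eq (ψ : ℝ → ℝ) :
    (fun t ↦ simpsonKernel t * ψ t) =ᵐ[volume]
      fun t ↦ 1 / 6 * ψ t - (1 - t) * ψ t + 2 / 3 * {x | x ≤ 1 / 2}.indicator ψ t := by
  filter_upwards [volume.ae_ne (1 / 2 : ℝ)] with t ht
  rcases ht.lt_or_gt with h | h
  · rw [simpsonKernel, if_pos h, indicator_of_mem (show t ∈ {x | x ≤ 1 / 2} from h.le)]
    ring
  · rw [simpsonKernel, if_neg h.not_gt,
      indicator_of_notMem (show t ∉ {x | x ≤ 1 / 2} from h.not_ge)]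
    ring

theorem simpson_error_eq_integral_simpsonKernel_mul {φ ψ : ℝ → ℝ}
    (hψ : IntervalIntegrable ψ volume 0 1)
    (hφ : ∀ t ∈ Icc 0 1, φ t = φ 0 + ∫ s in 0..t, ψ s) :
    1 / 6 * (φ 0 + 4 * φ (1 / 2) + φ 1) - ∫ t in 0..1, φ t =
      ∫ t in 0..1, simpsonKernel t * ψ t := by
  have hψ_half : IntervalIntegrable ({x | x ≤ 1 / 2}.indicator ψ) volume 0 1 :=
    ⟨hψ.1.indicator measurableSet_Iic, hψ.2.indicator measurableSet_Iic⟩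
  have hψ_lin : IntervalIntegrable (fun t ↦ (1 - t) * ψ t) volume 0 1 :=
    hψ.continuousOn_mul (continuous_const.sub continuous_id).continuousOn
  have hmean := integral_eq_mul_add_integral_sub_mul hψ (uIcc_of_le (zero_le_one' ℝ) ▸ hφ)
  have hφ_half := hφ (1 / 2) ⟨by norm_num, by norm_num⟩
  have hφ_one := hφ 1 ⟨zero_le_one, le_rfl⟩
  rw [integral_congr_ae_restrict (ae_restrict_of_ae (simpsonKernel_mul_ae_eq ψ)),
    intervalIntegral.integral_add ((hψ.const_mul _).sub hψ_lin) (hψ_half.const_mul _),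
    intervalIntegral.integral_sub (hψ.const_mul _) hψ_lin,
    intervalIntegral.integral_const_mul, intervalIntegral.integral_const_mul,
    intervalIntegral.integral_indicator ⟨by norm_num, by norm_num⟩, hmean, hφ_half, hφ_one]
  ring

theorem stmt19_general (f f' : ℝ → ℝ) (a b : ℝ) (hab : a < b)
    (hFTC : ∀ x ∈ Set.Icc a b, f x = f a + ∫ t in a..x, f' t)
    (hint' : IntervalIntegrable (fun t => f' (a + t * (b - a))) MeasureTheory.volume 0 1)
    (m : ℝ → ℝ)
    (hm : ∀ t : ℝ, m t = if t < 1/2 then t - 1/6 else t - 5/6) :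
    (1/6 : ℝ) * (f a + 4 * f ((a + b) / 2) + f b) - (1 / (b - a)) * (∫ x in a..b, f x) =
      (b - a) * ∫ t in (0:ℝ)..1, m t * f' (a + t * (b - a)) := by
  have hba : 0 < b - a := sub_pos.2 hab
  have hφ : ∀ t ∈ Icc (0 : ℝ) 1, f (a + t * (b - a)) =
      f (a + 0 * (b - a)) + ∫ s in 0..t, (b - a) * f' (a + s * (b - a)) := by
    intro t ht
    rw [intervalIntegral.integral_const_mul, mul_integral_comp_add_mul_sub, zero_mul, add_zero]
    exact hFTC _ ⟨by nlinarith [ht.1], by nlinarith [ht.2]⟩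
  have hsimpson := simpson_error_eq_integral_simpsonKernel_mul (hint'.const_mul (b - a)) hφ
  rw [show a + 0 * (b - a) = a by ring, show a + 1 / 2 * (b - a) = (a + b) / 2 by ring,
    show a + 1 * (b - a) = b by ring] at hsimpson
  simp only [mul_left_comm (simpsonKernel _), intervalIntegral.integral_const_mul] at hsimpson
  have hmean := mul_integral_comp_add_mul_sub f a b 1
  rw [one_mul, add_sub_cancel] at hmean
  rw [show m = simpsonKernel from funext hm, ← hmean, ← hsimpson, one_div (b - a),
    inv_mul_cancel_left₀ hba.ne']

theorem stmt19 (f f' : ℝ → ℝ) (a b : ℝ) (hab : a < b)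
    (hint : IntervalIntegrable f' MeasureTheory.volume a b)
    (hFTC : ∀ x ∈ Set.Icc a b, f x = f a + ∫ t in a..x, f' t)
    (hint' : IntervalIntegrable (fun t => f' (a + t * (b - a))) MeasureTheory.volume 0 1)
    (m : ℝ → ℝ)
    (hm : ∀ t : ℝ, m t = if t < 1/2 then t - 1/6 else t - 5/6) :
    (1/6 : ℝ) * (f a + 4 * f ((a + b) / 2) + f b) - (1 / (b - a)) * (∫ x in a..b, f x) =
      (b - a) * ∫ t in (0:ℝ)..1, m t * f' (a + t * (b - a)) :=
  stmt19_general f f' a b hab hFTC hint' m hm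
end
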